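/- arXiv:1612.01783 — 4 statements merged into one kernel-verified Lean document; each statement's English description precedes it below -/
import Mathlib

section
/- The matrix X(1, −1, 1, 1, −1, 1, −2, 1) is nilpotent; equivalently, its characteristic polynomial is t^8. -/
open Polynomial

/-- The 8×8 matrix X(x₁,…,x₈) from the paper (here `x i` denotes `x_{i+1}`). -/
def Xmat (F : Type) [Field F] (x : Fin 8 → F) : Matrix (Fin 8) (Fin 8) F :=
  !![x 0, 1, 0, 0, 0, 0, 0, 0;
     x 6, x 1, 1, 0, 0, 0, 0, 0;
     0, x 2, 0, 1, 0, 0, 0, 0;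
     0, 0, 0, 0, 1, 0, 0, 0;
     0, 0, 0, 0, 0, 1, 0, 0;
     0, x 7, 0, 0, 0, 0, 1, 0;
     0, 0, 0, 0, 0, 0, 0, 1;
     x 5, 0, 0, x 4, 0, x 3, 0, 0]

theorem Matrix.charpoly_eq_X_pow_card_of_isNilpotent {R n : Type*} [CommRing R] [IsDomain R]
    [Fintype n] [DecidableEq n] {M : Matrix n n R} (hM : IsNilpotent M) :
    M.charpoly = X ^ Fintype.card n :=
  sub_eq_zero.mp (Matrix.isNilpotent_charpoly_sub_pow_of_isNilpotent hM).eq_zero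

def intXmat : Matrix (Fin 8) (Fin 8) ℤ :=
  !![1, 1, 0, 0, 0, 0, 0, 0;
     -2, -1, 1, 0, 0, 0, 0, 0;
     0, 1, 0, 1, 0, 0, 0, 0;
     0, 0, 0, 0, 1, 0, 0, 0;
     0, 0, 0, 0, 0, 1, 0, 0;
     0, 1, 0, 0, 0, 0, 1, 0;
     0, 0, 0, 0, 0, 0, 0, 1;
     1, 0, 0, -1, 0, 1, 0, 0]

-- Over `ℤ` the power is computed by `decide` in the kernel; equality in `ℂ` is not decidable.
theorem intXmat_pow_eight : intXmat ^ 8 = 0 := by decide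

theorem Xmat_eq_map_intXmat (F : Type) [Field F] :
    Xmat F ![1, -1, 1, 1, -1, 1, -2, 1] = (Int.castRingHom F).mapMatrix intXmat := by
  ext i j
  fin_cases i <;> fin_cases j <;> simp [Xmat, intXmat]

theorem isNilpotent_Xmat (F : Type) [Field F] :
    IsNilpotent (Xmat F ![1, -1, 1, 1, -1, 1, -2, 1]) := by
  rw [Xmat_eq_map_intXmat]
  exact (IsNilpotent.mk _ 8 intXmat_pow_eight).map _

/-- The matrix X(1, −1, 1, 1, −1, 1, −2, 1) is nilpotent; equivalently, its
characteristic polynomial is t^8. -/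
theorem stmt2 :
    IsNilpotent (Xmat ℂ ![1, -1, 1, 1, -1, 1, -2, 1]) ∧
    (Xmat ℂ ![1, -1, 1, 1, -1, 1, -2, 1]).charpoly = X ^ 8 :=
  ⟨isNilpotent_Xmat ℂ, Matrix.charpoly_eq_X_pow_card_of_isNilpotent (isNilpotent_Xmat ℂ)⟩
end

section
/- Every 8×8 complex matrix M with zero pattern S is diagonally similar to a matrix of the form X(x_1,…,x_8): there exist an invertible diagonal 8×8 complex matrix D and nonzero complex numbers x_1,…,x_8 such that D M D^{-1} = X(x_1,…,x_8). -/
open Polynomial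

/-- The zero pattern `S` of the matrix `X` (0-indexed positions). -/
def Spat : Finset (Fin 8 × Fin 8) :=
  {(0,0), (0,1), (1,0), (1,1), (1,2), (2,1), (2,3), (3,4), (4,5),
   (5,1), (5,6), (6,7), (7,0), (7,3), (7,5)}

section VecHelpers
variable {α : Type*} (v0 v1 v2 v3 v4 v5 v6 v7 : α)

@[simp] lemma vec8_zero' : ![v0,v1,v2,v3,v4,v5,v6,v7] 0 = v0 := rfl
@[simp] lemma vec8_one' : ![v0,v1,v2,v3,v4,v5,v6,v7] 1 = v1 := rfl
@[simp] lemma vec8_two' : ![v0,v1,v2,v3,v4,v5,v6,v7] 2 = v2 := rfl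
@[simp] lemma vec8_three' : ![v0,v1,v2,v3,v4,v5,v6,v7] 3 = v3 := rfl
@[simp] lemma vec8_four' : ![v0,v1,v2,v3,v4,v5,v6,v7] 4 = v4 := rfl
@[simp] lemma vec8_five : ![v0,v1,v2,v3,v4,v5,v6,v7] 5 = v5 := rfl
@[simp] lemma vec8_six : ![v0,v1,v2,v3,v4,v5,v6,v7] 6 = v6 := rfl
@[simp] lemma vec8_seven : ![v0,v1,v2,v3,v4,v5,v6,v7] 7 = v7 := rfl

end VecHelpers

section FinHelpers
@[simp] lemma fin8_mk0 (h : 0 < 8) : (⟨0, h⟩ : Fin 8) = 0 := rfl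
@[simp] lemma fin8_mk1 (h : 1 < 8) : (⟨1, h⟩ : Fin 8) = 1 := rfl
@[simp] lemma fin8_mk2 (h : 2 < 8) : (⟨2, h⟩ : Fin 8) = 2 := rfl
@[simp] lemma fin8_mk3 (h : 3 < 8) : (⟨3, h⟩ : Fin 8) = 3 := rfl
@[simp] lemma fin8_mk4 (h : 4 < 8) : (⟨4, h⟩ : Fin 8) = 4 := rfl
@[simp] lemma fin8_mk5 (h : 5 < 8) : (⟨5, h⟩ : Fin 8) = 5 := rfl
@[simp] lemma fin8_mk6 (h : 6 < 8) : (⟨6, h⟩ : Fin 8) = 6 := rfl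
@[simp] lemma fin8_mk7 (h : 7 < 8) : (⟨7, h⟩ : Fin 8) = 7 := rfl
end FinHelpers
set_option maxHeartbeats 4000000 in
/-- Every 8×8 complex matrix M with zero pattern S is diagonally similar to a matrix
of the form X(x₁,…,x₈). -/
theorem stmt7 (M : Matrix (Fin 8) (Fin 8) ℂ)
    (hM : ∀ i j, M i j ≠ 0 ↔ (i, j) ∈ Spat) :
    ∃ (d : Fin 8 → ℂ) (x : Fin 8 → ℂ), (∀ i, d i ≠ 0) ∧ (∀ i, x i ≠ 0) ∧
      Matrix.diagonal d * M * (Matrix.diagonal d)⁻¹ = Xmat ℂ x := by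
  have hne : ∀ i j : Fin 8, (i, j) ∈ Spat → M i j ≠ 0 := fun i j h => (hM i j).mpr h
  have hz : ∀ i j : Fin 8, (i, j) ∉ Spat → M i j = 0 := by
    intro i j h
    by_contra hc
    exact h ((hM i j).mp hc)
  clear hM
  have h01 := hne 0 1 (by decide)
  have h12 := hne 1 2 (by decide)
  have h23 := hne 2 3 (by decide)
  have h34 := hne 3 4 (by decide)
  have h45 := hne 4 5 (by decide)
  have h56 := hne 5 6 (by decide)
  have h67 := hne 6 7 (by decide)
  have h00 := hne 0 0 (by decide)
  have h11 := hne 1 1 (by decide)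
  have h10 := hne 1 0 (by decide)
  have h21 := hne 2 1 (by decide)
  have h51 := hne 5 1 (by decide)
  have h70 := hne 7 0 (by decide)
  have h73 := hne 7 3 (by decide)
  have h75 := hne 7 5 (by decide)
  clear hne
  have hz02 : M 0 2 = 0 := hz 0 2 (by decide)
  have hz03 : M 0 3 = 0 := hz 0 3 (by decide)
  have hz04 : M 0 4 = 0 := hz 0 4 (by decide)
  have hz05 : M 0 5 = 0 := hz 0 5 (by decide)
  have hz06 : M 0 6 = 0 := hz 0 6 (by decide)
  have hz07 : M 0 7 = 0 := hz 0 7 (by decide)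
  have hz13 : M 1 3 = 0 := hz 1 3 (by decide)
  have hz14 : M 1 4 = 0 := hz 1 4 (by decide)
  have hz15 : M 1 5 = 0 := hz 1 5 (by decide)
  have hz16 : M 1 6 = 0 := hz 1 6 (by decide)
  have hz17 : M 1 7 = 0 := hz 1 7 (by decide)
  have hz20 : M 2 0 = 0 := hz 2 0 (by decide)
  have hz22 : M 2 2 = 0 := hz 2 2 (by decide)
  have hz24 : M 2 4 = 0 := hz 2 4 (by decide)
  have hz25 : M 2 5 = 0 := hz 2 5 (by decide)
  have hz26 : M 2 6 = 0 := hz 2 6 (by decide)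
  have hz27 : M 2 7 = 0 := hz 2 7 (by decide)
  have hz30 : M 3 0 = 0 := hz 3 0 (by decide)
  have hz31 : M 3 1 = 0 := hz 3 1 (by decide)
  have hz32 : M 3 2 = 0 := hz 3 2 (by decide)
  have hz33 : M 3 3 = 0 := hz 3 3 (by decide)
  have hz35 : M 3 5 = 0 := hz 3 5 (by decide)
  have hz36 : M 3 6 = 0 := hz 3 6 (by decide)
  have hz37 : M 3 7 = 0 := hz 3 7 (by decide)
  have hz40 : M 4 0 = 0 := hz 4 0 (by decide)
  have hz41 : M 4 1 = 0 := hz 4 1 (by decide)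
  have hz42 : M 4 2 = 0 := hz 4 2 (by decide)
  have hz43 : M 4 3 = 0 := hz 4 3 (by decide)
  have hz44 : M 4 4 = 0 := hz 4 4 (by decide)
  have hz46 : M 4 6 = 0 := hz 4 6 (by decide)
  have hz47 : M 4 7 = 0 := hz 4 7 (by decide)
  have hz50 : M 5 0 = 0 := hz 5 0 (by decide)
  have hz52 : M 5 2 = 0 := hz 5 2 (by decide)
  have hz53 : M 5 3 = 0 := hz 5 3 (by decide)
  have hz54 : M 5 4 = 0 := hz 5 4 (by decide)
  have hz55 : M 5 5 = 0 := hz 5 5 (by decide)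
  have hz57 : M 5 7 = 0 := hz 5 7 (by decide)
  have hz60 : M 6 0 = 0 := hz 6 0 (by decide)
  have hz61 : M 6 1 = 0 := hz 6 1 (by decide)
  have hz62 : M 6 2 = 0 := hz 6 2 (by decide)
  have hz63 : M 6 3 = 0 := hz 6 3 (by decide)
  have hz64 : M 6 4 = 0 := hz 6 4 (by decide)
  have hz65 : M 6 5 = 0 := hz 6 5 (by decide)
  have hz66 : M 6 6 = 0 := hz 6 6 (by decide)
  have hz71 : M 7 1 = 0 := hz 7 1 (by decide)
  have hz72 : M 7 2 = 0 := hz 7 2 (by decide)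
  have hz74 : M 7 4 = 0 := hz 7 4 (by decide)
  have hz76 : M 7 6 = 0 := hz 7 6 (by decide)
  have hz77 : M 7 7 = 0 := hz 7 7 (by decide)
  have hdne : ∀ i : Fin 8, (![1, M 0 1, M 0 1 * M 1 2, M 0 1 * M 1 2 * M 2 3,
      M 0 1 * M 1 2 * M 2 3 * M 3 4, M 0 1 * M 1 2 * M 2 3 * M 3 4 * M 4 5,
      M 0 1 * M 1 2 * M 2 3 * M 3 4 * M 4 5 * M 5 6,
      M 0 1 * M 1 2 * M 2 3 * M 3 4 * M 4 5 * M 5 6 * M 6 7] : Fin 8 → ℂ) i ≠ 0 := by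
    intro i
    clear hz
    fin_cases i <;> simp_all
  refine ⟨![1, M 0 1, M 0 1 * M 1 2, M 0 1 * M 1 2 * M 2 3,
      M 0 1 * M 1 2 * M 2 3 * M 3 4, M 0 1 * M 1 2 * M 2 3 * M 3 4 * M 4 5,
      M 0 1 * M 1 2 * M 2 3 * M 3 4 * M 4 5 * M 5 6,
      M 0 1 * M 1 2 * M 2 3 * M 3 4 * M 4 5 * M 5 6 * M 6 7],
    ![M 0 0, M 1 1, M 1 2 * M 2 1, M 5 6 * M 6 7 * M 7 5,
      M 3 4 * M 4 5 * M 5 6 * M 6 7 * M 7 3,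
      M 0 1 * M 1 2 * M 2 3 * M 3 4 * M 4 5 * M 5 6 * M 6 7 * M 7 0,
      M 0 1 * M 1 0, M 1 2 * M 2 3 * M 3 4 * M 4 5 * M 5 1], hdne, ?_, ?_⟩
  · intro i
    clear hz hdne
    fin_cases i <;> simp_all
  · have hd : (Matrix.diagonal ![1, M 0 1, M 0 1 * M 1 2, M 0 1 * M 1 2 * M 2 3,
      M 0 1 * M 1 2 * M 2 3 * M 3 4, M 0 1 * M 1 2 * M 2 3 * M 3 4 * M 4 5,
      M 0 1 * M 1 2 * M 2 3 * M 3 4 * M 4 5 * M 5 6,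
      M 0 1 * M 1 2 * M 2 3 * M 3 4 * M 4 5 * M 5 6 * M 6 7])⁻¹
      = Matrix.diagonal (![1, M 0 1, M 0 1 * M 1 2, M 0 1 * M 1 2 * M 2 3,
      M 0 1 * M 1 2 * M 2 3 * M 3 4, M 0 1 * M 1 2 * M 2 3 * M 3 4 * M 4 5,
      M 0 1 * M 1 2 * M 2 3 * M 3 4 * M 4 5 * M 5 6,
      M 0 1 * M 1 2 * M 2 3 * M 3 4 * M 4 5 * M 5 6 * M 6 7]⁻¹) := by
      apply Matrix.inv_eq_right_inv
      rw [Matrix.diagonal_mul_diagonal]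
      ext i j
      rcases eq_or_ne i j with rfl | h
      · simp [Matrix.diagonal_apply_eq, mul_inv_cancel₀ (hdne i), Matrix.one_apply_eq]
      · simp [Matrix.diagonal_apply_ne _ h, Matrix.one_apply_ne h]
    rw [hd]
    clear hdne hz
    ext i j
    rw [Matrix.mul_diagonal, Matrix.diagonal_mul, Pi.inv_apply]
    fin_cases i <;> fin_cases j <;>
      simp only [Xmat, Matrix.of_apply, vec8_zero', vec8_one', vec8_two', vec8_three',
        vec8_four', vec8_five, vec8_six, vec8_seven, fin8_mk0, fin8_mk1, fin8_mk2, fin8_mk3,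
        fin8_mk4, fin8_mk5, fin8_mk6, fin8_mk7, hz02, hz03, hz04, hz05, hz06, hz07, hz13, hz14, hz15, hz16, hz17, hz20, hz22, hz24, hz25, hz26, hz27, hz30, hz31, hz32, hz33, hz35, hz36, hz37, hz40, hz41, hz42, hz43, hz44, hz46, hz47, hz50, hz52, hz53, hz54, hz55, hz57, hz60, hz61, hz62, hz63, hz64, hz65, hz66, hz71, hz72, hz74, hz76, hz77,
        one_mul, mul_one, mul_zero, zero_mul, inv_one] <;>
      (try (field_simp [h01, h12, h23, h34, h45, h56, h67])) <;> (try ring1) <;>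
      (try simp_all) <;>
      (try (rw [div_eq_iff (mul_ne_zero (mul_ne_zero (mul_ne_zero (mul_ne_zero h01 h12) h23) h34) h45)]; ring1))
end

section
/- Let ψ be a nonzero polynomial in k variables over ℂ of total degree at most d. Then every set of d + k distinct complex numbers contains k pairwise distinct elements σ_1,…,σ_k such that ψ(σ_1,…,σ_k) ≠ 0. -/
open MvPolynomial

lemma aux10 : ∀ (k : ℕ) (ψ : MvPolynomial (Fin k) ℂ), ψ ≠ 0 →
    ∀ U : Finset ℂ, ψ.totalDegree + k ≤ U.card →
    ∃ σ : Fin k → ℂ, Function.Injective σ ∧ (∀ i, σ i ∈ U) ∧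
      MvPolynomial.eval σ ψ ≠ 0 := by
  intro k
  induction k with
  | zero =>
    intro ψ hψ U _
    refine ⟨Fin.elim0, Function.injective_of_subsingleton _, fun i => i.elim0, ?_⟩
    rw [eq_C_of_isEmpty ψ, eval_C]
    intro h
    apply hψ
    rw [eq_C_of_isEmpty ψ, h, map_zero]
  | succ k ih =>
    intro ψ hψ U hcard
    set q := finSuccEquiv ℂ k ψ with hq
    have hq0 : q ≠ 0 := by
      simpa [hq] using (map_ne_zero_iff _ (finSuccEquiv ℂ k).injective).2 hψ
    set n := q.natDegree
    set c := q.leadingCoeff with hc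
    have hc0 : c ≠ 0 := Polynomial.leadingCoeff_ne_zero.2 hq0
    have hc0' : q.coeff n ≠ 0 := hc0
    have hcn : c.totalDegree + n ≤ ψ.totalDegree :=
      totalDegree_coeff_finSuccEquiv_add_le ψ n hc0'
    have hck : c.totalDegree + k ≤ U.card := by omega
    obtain ⟨σ, hinj, hmem, hev⟩ := ih c hc0 U hck
    set p := q.map (MvPolynomial.eval σ) with hp
    have hpn : p.coeff n ≠ 0 := by
      rw [hp, Polynomial.coeff_map]
      exact hev
    have hp0 : p ≠ 0 := fun h => hpn (by simp [h])
    have hpdeg : p.natDegree ≤ n := Polynomial.natDegree_map_le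
    set B := (Finset.univ.image σ) ∪ p.roots.toFinset with hB
    have hBcard : B.card ≤ k + n := by
      calc B.card ≤ (Finset.univ.image σ).card + p.roots.toFinset.card :=
            Finset.card_union_le _ _
        _ ≤ k + n := by
            have h1 : (Finset.univ.image σ).card ≤ k := by
              simpa using Finset.card_image_le (s := (Finset.univ : Finset (Fin k))) (f := σ)
            have h2 : p.roots.toFinset.card ≤ n := by
              refine le_trans (Multiset.toFinset_card_le _) ?_
              exact le_trans (Polynomial.card_roots' p) hpdeg
            omega
    have hUB : (U \ B).Nonempty := by
      have : B.card < U.card := by omega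
      rw [← Finset.card_pos]
      have := Finset.le_card_sdiff B U
      omega
    obtain ⟨y, hy⟩ := hUB
    rw [Finset.mem_sdiff] at hy
    obtain ⟨hyU, hyB⟩ := hy
    have hynr : y ∉ Set.range σ := by
      rintro ⟨i, rfl⟩
      exact hyB (Finset.mem_union_left _ (Finset.mem_image_of_mem σ (Finset.mem_univ i)))
    have hyroot : Polynomial.eval y p ≠ 0 := by
      intro h
      apply hyB
      refine Finset.mem_union_right _ ?_
      rw [Multiset.mem_toFinset, Polynomial.mem_roots hp0]
      exact h
    refine ⟨Fin.cons y σ, ?_, ?_, ?_⟩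
    · rw [Fin.cons_injective_iff]
      exact ⟨hynr, hinj⟩
    · intro i
      refine Fin.cases ?_ ?_ i
      · simpa using hyU
      · intro j; simpa using hmem j
    · rw [eval_eq_eval_mv_eval']
      exact hyroot

/-- If ψ is a nonzero polynomial in k variables over ℂ of total degree at most d,
then every set of d + k distinct complex numbers contains k pairwise distinct
elements σ₁,…,σ_k with ψ(σ₁,…,σ_k) ≠ 0. -/
theorem stmt10 (k d : ℕ) (ψ : MvPolynomial (Fin k) ℂ) (hψ : ψ ≠ 0)
    (hdeg : ψ.totalDegree ≤ d) (U : Finset ℂ) (hU : U.card = d + k) :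
    ∃ σ : Fin k → ℂ, Function.Injective σ ∧ (∀ i, σ i ∈ U) ∧
      MvPolynomial.eval σ ψ ≠ 0 := by
  exact aux10 k ψ hψ U (by omega)
end

section
/- For every m ≥ 1, the 2m×2m zero pattern D_{2m} is spectrally arbitrary over ℂ: every monic polynomial of degree 2m over ℂ is the characteristic polynomial of a 2m×2m complex matrix that is block diagonal with m blocks of size 2×2, each block having all four entries nonzero. -/
open Polynomial Matrix

/-- A monic quadratic equals `X^2 + C c₁ X + C c₀`. -/
lemma monic_quad_eq (q : ℂ[X]) (hq : q.Monic) (hd : q.natDegree = 2) :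
    q = X ^ 2 + C (q.coeff 1) * X + C (q.coeff 0) := by
  ext n
  have h2 : q.coeff 2 = 1 := by
    have := hq.coeff_natDegree
    rwa [hd] at this
  match n with
  | 0 => simp
  | 1 => simp
  | 2 => simp [h2, coeff_X_pow]
  | (k+3) =>
    have : q.coeff (k+3) = 0 := coeff_eq_zero_of_natDegree_lt (by omega)
    simp [this, coeff_X_pow, coeff_C]

/-- Every monic quadratic over ℂ is the charpoly of a 2×2 matrix with all
entries nonzero. -/
lemma quad_realizable (q : ℂ[X]) (hq : q.Monic) (hd : q.natDegree = 2) :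
    ∃ B : Matrix (Fin 2) (Fin 2) ℂ, (∀ i j, B i j ≠ 0) ∧ B.charpoly = q := by
  set t : ℂ := -(q.coeff 1) with ht
  set d : ℂ := q.coeff 0 with hdd
  set h : ℂ[X] := X * (C t - X) - C d with hh
  have hne : h ≠ 0 := by
    intro h0
    have : h.coeff 2 = 0 := by rw [h0]; simp
    rw [hh] at this
    simp [coeff_X_pow, coeff_C, mul_comm] at this
  obtain ⟨a, ha⟩ := Infinite.exists_notMem_finset
    (insert (0:ℂ) (insert t h.roots.toFinset))
  simp only [Finset.mem_insert, Multiset.mem_toFinset, not_or] at ha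
  obtain ⟨ha0, hat, har⟩ := ha
  have heval : a * (t - a) - d ≠ 0 := by
    intro h0
    exact har (by rw [mem_roots hne]; simp [hh, IsRoot, h0])
  refine ⟨!![a, a * (t - a) - d; 1, t - a], ?_, ?_⟩
  · intro i j
    fin_cases i <;> fin_cases j <;>
      simp [ha0, heval, sub_ne_zero.mpr (Ne.symm hat)]
  · rw [Matrix.charpoly, Matrix.det_fin_two]
    have c00 : charmatrix !![a, a * (t - a) - d; 1, t - a] 0 0 = X - C a :=
      charmatrix_apply_eq _ _
    have c11 : charmatrix !![a, a * (t - a) - d; 1, t - a] 1 1 = X - C (t - a) := by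
      rw [charmatrix_apply_eq]; simp
    have c01 : charmatrix !![a, a * (t - a) - d; 1, t - a] 0 1
        = -C (a * (t - a) - d) := by
      rw [charmatrix_apply_ne _ _ _ (by decide)]; simp
    have c10 : charmatrix !![a, a * (t - a) - d; 1, t - a] 1 0 = -C 1 := by
      rw [charmatrix_apply_ne _ _ _ (by decide)]; simp
    rw [c00, c11, c01, c10]
    rw [monic_quad_eq q hq hd]
    have hc1 : q.coeff 1 = -t := by rw [ht]; ring
    rw [hc1, hdd]
    simp only [C_sub, C_mul, C_neg, C_add, C_1]
    ring

/-- Every monic polynomial of degree 2m over ℂ is a product of m monic quadratics. -/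
lemma factor_quads : ∀ (m : ℕ) (p : ℂ[X]), p.Monic → p.natDegree = 2 * m →
    ∃ q : Fin m → ℂ[X], (∀ k, (q k).Monic ∧ (q k).natDegree = 2) ∧ ∏ k, q k = p := by
  intro m
  induction m with
  | zero =>
    intro p hp hd
    refine ⟨Fin.elim0, fun k => k.elim0, ?_⟩
    simp
    exact (hp.natDegree_eq_zero.mp (by omega)).symm
  | succ n ih =>
    intro p hp hd
    have hp0 : p ≠ 0 := hp.ne_zero
    have hdeg : 0 < p.degree := natDegree_pos_iff_degree_pos.mp (by omega)
    obtain ⟨r, hr⟩ := Complex.exists_root hdeg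
    obtain ⟨p₁, hp₁⟩ := (dvd_iff_isRoot.mpr hr)
    have hmr : (X - C r).Monic := monic_X_sub_C r
    have hp₁m : p₁.Monic := hmr.of_mul_monic_left (hp₁ ▸ hp)
    have hp₁d : p₁.natDegree = 2 * n + 1 := by
      have := natDegree_mul (X_sub_C_ne_zero r) hp₁m.ne_zero
      rw [← hp₁, natDegree_X_sub_C] at this
      omega
    have hdeg₁ : 0 < p₁.degree := natDegree_pos_iff_degree_pos.mp (by omega)
    obtain ⟨s, hs⟩ := Complex.exists_root hdeg₁
    obtain ⟨p₂, hp₂⟩ := (dvd_iff_isRoot.mpr hs)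
    have hms : (X - C s).Monic := monic_X_sub_C s
    have hp₂m : p₂.Monic := hms.of_mul_monic_left (hp₂ ▸ hp₁m)
    have hp₂d : p₂.natDegree = 2 * n := by
      have := natDegree_mul (X_sub_C_ne_zero s) hp₂m.ne_zero
      rw [← hp₂, natDegree_X_sub_C] at this
      omega
    obtain ⟨q, hq, hprod⟩ := ih p₂ hp₂m hp₂d
    refine ⟨Fin.cons ((X - C r) * (X - C s)) q, ?_, ?_⟩
    · intro k
      refine Fin.cases ?_ ?_ k
      · constructor
        · exact hmr.mul hms
        · simp [natDegree_mul (X_sub_C_ne_zero r) (X_sub_C_ne_zero s)]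
      · intro i; simpa using hq i
    · rw [Fin.prod_cons, hprod, hp₁, hp₂]; ring

lemma charmatrix_blockDiagonal {o : Type} [Fintype o] [DecidableEq o]
    {n : Type} [Fintype n] [DecidableEq n] {R : Type} [CommRing R]
    (M : o → Matrix n n R) :
    charmatrix (blockDiagonal M) = blockDiagonal fun k => charmatrix (M k) := by
  ext ⟨i, k⟩ ⟨j, k'⟩
  simp only [charmatrix_apply, blockDiagonal_apply, Matrix.diagonal_apply, Prod.mk.injEq]
  by_cases hk : k = k'
  · subst hk
    by_cases hij : i = j <;> simp [hij, charmatrix_apply, Matrix.diagonal_apply]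
  · simp [hk, charmatrix_apply]

lemma charpoly_blockDiag {o : Type} [Fintype o] [DecidableEq o]
    {n : Type} [Fintype n] [DecidableEq n] {R : Type} [CommRing R]
    (M : o → Matrix n n R) :
    (blockDiagonal M).charpoly = ∏ k, (M k).charpoly := by
  rw [Matrix.charpoly, charmatrix_blockDiagonal, det_blockDiagonal]
  rfl

/-- The explicit equivalence `Fin 2 × Fin m ≃ Fin (2*m)`. -/
def pairEquiv (m : ℕ) : Fin 2 × Fin m ≃ Fin (2 * m) where
  toFun x := ⟨x.2.val * 2 + x.1.val, by omega⟩
  invFun i := (⟨i.val % 2, by omega⟩, ⟨i.val / 2, by omega⟩)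
  left_inv := by
    rintro ⟨⟨a, ha⟩, ⟨b, hb⟩⟩
    have h1 : (b * 2 + a) % 2 = a := by omega
    have h2 : (b * 2 + a) / 2 = b := by omega
    simp [h1, h2]
  right_inv := by
    rintro ⟨i, hi⟩
    apply Fin.ext
    simp
    omega


open Polynomial

/-- A zero pattern `P` on an index type `ι` is spectrally arbitrary over a field `F`
if every monic polynomial of degree `Fintype.card ι` is the characteristic polynomial
of a matrix whose nonzero entries are exactly the positions in `P`. -/
def IsSpectrallyArbitrary (F : Type) [Field F] {ι : Type} [Fintype ι] [DecidableEq ι]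
    (P : Finset (ι × ι)) : Prop :=
  ∀ p : F[X], p.Monic → p.natDegree = Fintype.card ι →
    ∃ M : Matrix ι ι F, (∀ i j, M i j ≠ 0 ↔ (i, j) ∈ P) ∧ M.charpoly = p

/-- The 2m×2m zero pattern `D_{2m}`: m diagonal 2×2 all-nonzero blocks
(positions (i,j) with ⌈i/2⌉ = ⌈j/2⌉, here 0-indexed as i/2 = j/2). -/
def Dpat (m : ℕ) : Finset (Fin (2 * m) × Fin (2 * m)) :=
  Finset.univ.filter fun q => q.1.val / 2 = q.2.val / 2

/-- For every m ≥ 1, the 2m×2m zero pattern D_{2m} is spectrally arbitrary over ℂ. -/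
theorem stmt11 (m : ℕ) (hm : 1 ≤ m) : IsSpectrallyArbitrary ℂ (Dpat m) := by
  intro p hp hdeg
  rw [Fintype.card_fin] at hdeg
  obtain ⟨q, hq, hprod⟩ := factor_quads m p hp hdeg
  choose B hBne hBcp using fun k => quad_realizable (q k) (hq k).1 (hq k).2
  set e := pairEquiv m
  refine ⟨Matrix.reindex e e (Matrix.blockDiagonal B), ?_, ?_⟩
  · intro i j
    constructor
    · intro hne
      simp only [Matrix.reindex_apply, Matrix.submatrix_apply,
        Matrix.blockDiagonal_apply] at hne
      rw [Dpat, Finset.mem_filter]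
      refine ⟨Finset.mem_univ _, ?_⟩
      by_cases hkk : (e.symm i).2 = (e.symm j).2
      · have h1 : ((e.symm i).2 : Fin m).val = i.val / 2 := rfl
        have h2 : ((e.symm j).2 : Fin m).val = j.val / 2 := rfl
        have := congrArg Fin.val hkk
        rw [h1, h2] at this
        exact this
      · simp [hkk] at hne
    · intro hmem
      rw [Dpat, Finset.mem_filter] at hmem
      have hkk : (e.symm i).2 = (e.symm j).2 := Fin.ext hmem.2
      simp only [Matrix.reindex_apply, Matrix.submatrix_apply,
        Matrix.blockDiagonal_apply, hkk, if_pos rfl]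
      exact hBne _ _ _
  · rw [Matrix.charpoly_reindex, charpoly_blockDiag]
    rw [← hprod]
    exact Finset.prod_congr rfl fun k _ => hBcp k
end
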